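/- arXiv:2202.05617 — 2 statements merged into one kernel-verified Lean document; each statement's English description precedes it below -/
import Mathlib

section
/- Faà di Bruno's formula: if g(x) = Σ_{n≥0} b_n x^n/n! and f(x) = Σ_{n≥1} a_n x^n/n! are formal exponential power series (f with zero constant term), then the composition g∘f satisfies (g∘f)(x) = b₀ + Σ_{n≥1} (Σ_{k=1}^{n} b_k · B_{n,k}(a₁,…,a_{n−k+1})) · x^n/n!, where B_{n,k} is the partial exponential Bell polynomial. -/
/-!
As `f` has no constant term, `[xⁿ] fᵏ` only involves the coefficients of `f` of degree `1, …, n`,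
so the multinomial theorem writes `[xⁿ] fᵏ / k!` as a sum, over multiplicity vectors
`(m₁, …, mₙ)` with `∑ mᵢ = k` and `∑ i mᵢ = n`, of `∏ (aᵢ / i!)^{mᵢ} / mᵢ!`. These vectors are
exactly the multiplicities of the partitions of `n` into `k` parts, and the summand is the
corresponding term of `B_{n,k}(a) / n!`.
-/

open Finset

/-- The partial exponential Bell polynomial
`B_{m,j}(x) = Σ_{λ⊢m, ℓ(λ)=j} m!/(∏ (i!)^{λ_i} λ_i!) ∏ x_i^{λ_i}`,
evaluated at `x : ℕ → R` over a commutative `ℚ`-algebra `R`. -/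
noncomputable def bellPoly {R : Type*} [CommRing R] [Algebra ℚ R] (m j : ℕ) (x : ℕ → R) : R :=
  ∑ lam : Nat.Partition m,
    if Multiset.card lam.parts = j then
      ((m.factorial : ℚ) / ∏ i ∈ Icc 1 m,
          ((i.factorial : ℚ) ^ (Multiset.count i lam.parts) *
            ((Multiset.count i lam.parts).factorial : ℚ))) •
        ∏ i ∈ Icc 1 m, x i ^ (Multiset.count i lam.parts)
    else 0

namespace PowerSeries

variable {R : Type*} [CommRing R]

theorem coeff_pow_eq_of_trunc_eq {φ ψ : R⟦X⟧} {n : ℕ} (h : trunc (n + 1) φ = trunc (n + 1) ψ)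
    (k : ℕ) : coeff n (φ ^ k) = coeff n (ψ ^ k) := by
  rw [← coeff_coe_trunc_of_lt n.lt_succ_self, ← trunc_trunc_pow, h, trunc_trunc_pow,
    coeff_coe_trunc_of_lt n.lt_succ_self]

theorem trunc_eq_trunc_sum_monomial {φ : R⟦X⟧} (hφ : constantCoeff φ = 0) (n : ℕ) :
    trunc (n + 1) φ = trunc (n + 1) (∑ i ∈ Icc 1 n, monomial i (coeff i φ)) := by
  ext j
  rw [coeff_trunc, coeff_trunc, map_sum]
  simp only [coeff_monomial, sum_ite_eq, mem_Icc]
  rcases j with _ | j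
  · simp [hφ]
  · split_ifs <;> first | rfl | omega

theorem coeff_sum_monomial_pow (s : Finset ℕ) (c : ℕ → R) (k n : ℕ) :
    coeff n ((∑ i ∈ s, monomial i (c i)) ^ k) =
      ∑ m ∈ piAntidiag s k with ∑ i ∈ s, m i * i = n,
        (Nat.multinomial s m : R) * ∏ i ∈ s, c i ^ m i := by
  have hterm (m : ℕ → ℕ) : ∏ i ∈ s, monomial i (c i) ^ m i =
      C (∏ i ∈ s, c i ^ m i) * X ^ (∑ i ∈ s, m i * i) := by
    simp_rw [monomial_eq_C_mul_X_pow, mul_pow, prod_mul_distrib, ← map_pow, ← map_prod, ← pow_mul,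
      prod_pow_eq_pow_sum, mul_comm]
  rw [sum_pow_eq_sum_piAntidiag, map_sum, sum_filter]
  refine sum_congr rfl fun m _ => ?_
  rw [hterm, ← map_natCast (C (R := R)), ← mul_assoc, ← map_mul, coeff_C_mul_X_pow]
  exact if_congr eq_comm rfl rfl

theorem coeff_pow_eq_sum_piAntidiag {φ : R⟦X⟧} (hφ : constantCoeff φ = 0) (k n : ℕ) :
    coeff n (φ ^ k) =
      ∑ m ∈ piAntidiag (Icc 1 n) k with ∑ i ∈ Icc 1 n, m i * i = n,
        (Nat.multinomial (Icc 1 n) m : R) * ∏ i ∈ Icc 1 n, coeff i φ ^ m i := by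
  rw [coeff_pow_eq_of_trunc_eq (trunc_eq_trunc_sum_monomial hφ n), coeff_sum_monomial_pow]

end PowerSeries

open scoped Nat

namespace Nat.Partition

theorem parts_toFinset_subset_Icc {n : ℕ} (lam : n.Partition) : lam.parts.toFinset ⊆ Icc 1 n :=
  fun _ hi => mem_Icc.2 ⟨lam.parts_pos (Multiset.mem_toFinset.1 hi),
    le_of_mem_parts (Multiset.mem_toFinset.1 hi)⟩

theorem sum_ite_card_parts_eq_sum_piAntidiag {M : Type*} [AddCommMonoid M] (n k : ℕ)
    (g : (ℕ → ℕ) → M) :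
    ∑ lam : n.Partition, (if Multiset.card lam.parts = k then g (lam.parts.count ·) else 0) =
      ∑ m ∈ piAntidiag (Icc 1 n) k with ∑ i ∈ Icc 1 n, m i * i = n, g m := by
  rw [← sum_filter]
  refine sum_bij (fun lam _ => (lam.parts.count ·)) ?_ ?_ ?_ fun _ _ => rfl
  · intro lam hlam
    rw [mem_filter] at hlam ⊢
    have hsub := lam.parts_toFinset_subset_Icc
    refine ⟨mem_piAntidiag.2 ⟨?_, fun i hi =>
      hsub (Multiset.mem_toFinset.2 (Multiset.count_ne_zero.1 hi))⟩,
      (mem_finsuppAntidiag.1 lam.toFinsuppAntidiag_mem_finsuppAntidiag).1⟩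
    rw [← sum_subset hsub, Multiset.toFinset_sum_count_eq, hlam.2]
    intro i _ hi
    exact Multiset.count_eq_zero.2 (by simpa using hi)
  · intro lam₁ _ lam₂ _ h
    exact Nat.Partition.ext (Multiset.ext.2 (congrFun h))
  · intro m hm
    obtain ⟨⟨hcard, hsupp⟩, hsum⟩ := mem_filter.1 hm |>.imp_left mem_piAntidiag.1
    let parts := Finsupp.toMultiset (Finsupp.onFinset _ m hsupp)
    have hcount (i : ℕ) : parts.count i = m i := by simp [parts]
    have hmem {i : ℕ} (hi : i ∈ parts) : i ∈ Icc 1 n := by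
      rw [← Multiset.count_ne_zero, hcount] at hi
      exact hsupp i hi
    refine ⟨⟨parts, fun hi => (mem_Icc.1 (hmem hi)).1, ?_⟩, ?_, funext hcount⟩
    · simp [parts, hsum]
    · simp [parts, hcard]

end Nat.Partition

section BellPoly

variable {R : Type*} [CommRing R] [Algebra ℚ R]

theorem inv_factorial_sum_smul_multinomial_mul_prod {ι : Type*} (s : Finset ι) (m : ι → ℕ)
    (w : ι → ℚ) (x : ι → R) :
    ((∑ i ∈ s, m i)! : ℚ)⁻¹ • ((Nat.multinomial s m : R) * ∏ i ∈ s, (w i • x i) ^ m i) =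
      (∏ i ∈ s, w i ^ m i / (m i)!) • ∏ i ∈ s, x i ^ m i := by
  have hspec : (∏ i ∈ s, ((m i)! : ℚ)) * Nat.multinomial s m = (∑ i ∈ s, m i)! := by
    exact_mod_cast Nat.multinomial_spec s m
  simp_rw [smul_pow, prod_smul, ← nsmul_eq_mul, ← Nat.cast_smul_eq_nsmul ℚ, smul_smul,
    prod_div_distrib]
  congr 1
  rw [← hspec]
  have : (Nat.multinomial s m : ℚ) ≠ 0 := Nat.cast_ne_zero.2 (Nat.multinomial_pos s m).ne'
  field_simp

theorem bellPoly_eq_sum_piAntidiag (n k : ℕ) (x : ℕ → R) :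
    bellPoly n k x =
      ∑ m ∈ piAntidiag (Icc 1 n) k with ∑ i ∈ Icc 1 n, m i * i = n,
        ((n ! : ℚ) / ∏ i ∈ Icc 1 n, ((i ! : ℚ) ^ m i * (m i)!)) • ∏ i ∈ Icc 1 n, x i ^ m i := by
  unfold bellPoly
  exact Nat.Partition.sum_ite_card_parts_eq_sum_piAntidiag n k
    fun m => ((n ! : ℚ) / ∏ i ∈ Icc 1 n, ((i ! : ℚ) ^ m i * (m i)!)) • ∏ i ∈ Icc 1 n, x i ^ m i

theorem bellPoly_zero_right {n : ℕ} (hn : n ≠ 0) (x : ℕ → R) : bellPoly n 0 x = 0 := by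
  rw [bellPoly_eq_sum_piAntidiag, piAntidiag_zero, filter_singleton,
    if_neg (by simpa using hn.symm), sum_empty]

open PowerSeries in
theorem inv_factorial_smul_coeff_pow_eq_bellPoly (a : ℕ → R) (k n : ℕ) :
    (k ! : ℚ)⁻¹ • coeff n ((mk fun i => if i = 0 then 0 else (i ! : ℚ)⁻¹ • a i) ^ k) =
      (n ! : ℚ)⁻¹ • bellPoly n k a := by
  rw [coeff_pow_eq_sum_piAntidiag (by simp), bellPoly_eq_sum_piAntidiag, smul_sum, smul_sum]
  refine sum_congr rfl fun m hm => ?_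
  have hcoeff : ∀ i ∈ Icc 1 n, coeff i (mk fun i => if i = 0 then 0 else (i ! : ℚ)⁻¹ • a i) =
      (i ! : ℚ)⁻¹ • a i := fun i hi => by simp [Nat.one_le_iff_ne_zero.1 (mem_Icc.1 hi).1]
  rw [prod_congr rfl fun i hi => congrArg (· ^ m i) (hcoeff i hi),
    ← (mem_piAntidiag.1 (mem_filter.1 hm).1).1, inv_factorial_sum_smul_multinomial_mul_prod,
    smul_smul]
  congr 1
  rw [← mul_div_assoc, inv_mul_cancel₀ (by positivity), one_div, ← prod_inv_distrib]
  simp only [div_eq_mul_inv, inv_pow, mul_inv]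

end BellPoly

/-- **Faà di Bruno's formula.**  If `g(x) = Σ_{n≥0} b_n x^n/n!` and
`f(x) = Σ_{n≥1} a_n x^n/n!`, then `(g∘f)(x) = b₀ + Σ_{n≥1}(Σ_{k=1}^n b_k B_{n,k}(a)) x^n/n!`.
Here, since `f` has zero constant term, the composition `g∘f` is the power series whose
`n`-th coefficient is `Σ_{k≤n} (b_k/k!)·[x^n](f^k)`. -/
theorem faa_di_bruno {R : Type*} [CommRing R] [Algebra ℚ R] (a b : ℕ → R) :
    let f : PowerSeries R :=
      PowerSeries.mk fun n => if n = 0 then 0 else ((n.factorial : ℚ)⁻¹) • a n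
    let gf : PowerSeries R :=
      PowerSeries.mk fun n =>
        ∑ k ∈ range (n + 1), ((k.factorial : ℚ)⁻¹) • (b k * PowerSeries.coeff n (f ^ k))
    gf = PowerSeries.mk fun n =>
      if n = 0 then b 0
      else ((n.factorial : ℚ)⁻¹) • ∑ k ∈ Icc 1 n, b k * bellPoly n k a := by
  intro f gf
  ext n
  rcases n with _ | n
  · simp [gf]
  have hterm (k : ℕ) : (k ! : ℚ)⁻¹ • (b k * PowerSeries.coeff (n + 1) (f ^ k)) =
      ((n + 1)! : ℚ)⁻¹ • (b k * bellPoly (n + 1) k a) := by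
    rw [← mul_smul_comm, ← mul_smul_comm]
    exact congrArg (b k * ·) (inv_factorial_smul_coeff_pow_eq_bellPoly a k (n + 1))
  rw [PowerSeries.coeff_mk, PowerSeries.coeff_mk, if_neg n.succ_ne_zero,
    sum_congr rfl fun k _ => hterm k, ← smul_sum, Nat.range_succ_eq_Icc_zero,
    ← add_sum_Ioc_eq_sum_Icc (Nat.zero_le _),
    bellPoly_zero_right n.succ_ne_zero, mul_zero, zero_add, ← Icc_add_one_left_eq_Ioc, zero_add]
end

section
/- Let m ≥ 2 and define ν_m via the recursion ν_m = Σ_{j=1}^{m−1} ν₁^{(j)} · B_{m−1,j}(ν₁,…,ν_{m−j}) in the ring of formal power series ℚ[[t]], with ν₁ = Σ_{n≥2} (−1)^n(n−2)! t^n/n!. Then each ν_m is a power series with integer coefficients n!·[t^n]ν_m ∈ ℤ for all n, and the lowest-order nonvanishing term of ν_m is of order m+1, i.e. [t^n]ν_m = 0 for n ≤ m. -/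
open Finset

/-- `ν₁ = Σ_{n≥2} (−1)^n (n−2)! t^n/n! = (1+t)log(1+t) − t ∈ ℚ[[t]]`. -/
noncomputable def nuOne : PowerSeries ℚ :=
  PowerSeries.mk fun n => if 2 ≤ n then (-1) ^ n * ((n - 2).factorial : ℚ) / (n.factorial : ℚ) else 0

/-- The power series `ν_m ∈ ℚ[[t]]`, defined by
`ν_m = Σ_{j=1}^{m−1} ν₁^{(j)} · B_{m−1,j}(ν₁,…,ν_{m−j})` for `m ≥ 2`.  (The Bell polynomial
`B_{m−1,j}` only depends on its arguments `ν_1, …, ν_{m−j}`, so the guard `i < m` is benign.) -/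
noncomputable def nuSeries : ℕ → PowerSeries ℚ
  | 0 => 0
  | 1 => nuOne
  | (m + 2) =>
      ∑ j ∈ Icc 1 (m + 1),
        (PowerSeries.derivativeFun)^[j] nuOne *
          bellPoly (m + 1) j (fun i => if h : i < m + 2 then nuSeries i else 0)
  termination_by m => m
  decreasing_by omega

/-!
Call `f ∈ ℚ⟦t⟧` Hurwitz if `n! [tⁿ] f ∈ ℤ` for all `n`. Hurwitz series form a subring (since
`(i + j)! / (i! j!)` is an integer) that is stable under `d/dt`, and the coefficients
`m! / ∏ᵢ (i!^{cᵢ} cᵢ!)` of the Bell polynomials are integers, so every `ν_m` is Hurwitz by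
induction.

For the order, if `t^{i+1} ∣ xᵢ` for all `i` then `t^{m+j} ∣ B_{m,j}(x)`, and the coefficient of
`t^{m+j}` is `B_{m,j}` evaluated at the coefficients of `t^{i+1}` in the `xᵢ`. As `ν₁^{(j)}` has
order `2 - j`, every term of the recursion for `ν_{m+1}` is divisible by `t^{m+2}`, and only `j = 1`
and `j = 2` contribute to `[t^{m+2}]`: they give `[t^{m+1}] ν_m` and `B_{m,2}` of the leading
coefficients of `ν_1, …, ν_m`. By induction all leading coefficients are positive.
-/

open PowerSeries
open scoped Nat

def hurwitzSubring : Subring ℚ⟦X⟧ where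
  carrier := {f | ∀ n, (n ! : ℚ) * coeff n f ∈ (Int.castRingHom ℚ).range}
  zero_mem' n := by simp
  one_mem' n := by
    rw [coeff_one]
    split_ifs <;> simp
  add_mem' hf hg n := by
    rw [map_add, mul_add]
    exact add_mem (hf n) (hg n)
  neg_mem' hf n := by
    rw [map_neg, mul_neg]
    exact neg_mem (hf n)
  mul_mem' {f g} hf hg n := by
    rw [coeff_mul, mul_sum]
    refine sum_mem fun ⟨i, j⟩ hij => ?_
    obtain rfl : i + j = n := mem_antidiagonal.mp hij
    have hsplit : ((i + j)! : ℚ) * (coeff i f * coeff j g) =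
        (i + j).choose j * ((i ! : ℚ) * coeff i f) * ((j ! : ℚ) * coeff j g) := by
      rw [← Nat.add_choose_mul_factorial_mul_factorial]
      push_cast
      ring
    rw [hsplit]
    exact mul_mem (mul_mem (natCast_mem _ _) (hf i)) (hg j)

theorem iterate_derivative_mem_hurwitzSubring {f : ℚ⟦X⟧} (hf : f ∈ hurwitzSubring) (j : ℕ) :
    (derivative ℚ)^[j] f ∈ hurwitzSubring := by
  intro n
  rw [coeff_iterate_derivative, ← mul_assoc, ← Nat.cast_mul, Nat.factorial_mul_ascFactorial]
  exact hf (n + j)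

section LeadingCoeff

variable {R : Type*} [CommSemiring R]

theorem coeff_mul_of_X_pow_dvd {a b : ℕ} {f g : R⟦X⟧} (hf : X ^ a ∣ f) (hg : X ^ b ∣ g) :
    coeff (a + b) (f * g) = coeff a f * coeff b g := by
  obtain ⟨f, rfl⟩ := hf
  obtain ⟨g, rfl⟩ := hg
  rw [mul_mul_mul_comm, ← pow_add]
  simp [coeff_X_pow_mul']

theorem coeff_prod_of_X_pow_dvd {ι : Type*} (s : Finset ι) (a : ι → ℕ) (f : ι → R⟦X⟧)
    (hf : ∀ i ∈ s, X ^ a i ∣ f i) :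
    coeff (∑ i ∈ s, a i) (∏ i ∈ s, f i) = ∏ i ∈ s, coeff (a i) (f i) := by
  classical
  induction s using Finset.induction_on with
  | empty => simp
  | insert i s hi ih =>
    have hdvd : X ^ ∑ k ∈ s, a k ∣ ∏ k ∈ s, f k := by
      rw [← prod_pow_eq_pow_sum]
      exact prod_dvd_prod_of_dvd _ _ fun k hk => hf k (mem_insert_of_mem hk)
    rw [sum_insert hi, prod_insert hi, prod_insert hi,
      coeff_mul_of_X_pow_dvd (hf i (mem_insert_self i s)) hdvd,
      ih fun k hk => hf k (mem_insert_of_mem hk)]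

theorem coeff_pow_of_X_pow_dvd {a : ℕ} {f : R⟦X⟧} (hf : X ^ a ∣ f) (c : ℕ) :
    coeff (a * c) (f ^ c) = coeff a f ^ c := by
  simpa [mul_comm] using coeff_prod_of_X_pow_dvd (range c) (fun _ => a) (fun _ => f) fun _ _ => hf

end LeadingCoeff

namespace Nat.Partition

variable {m : ℕ} (lam : m.Partition)

theorem mem_Icc_of_mem_parts {i : ℕ} (hi : i ∈ lam.parts) : i ∈ Icc 1 m :=
  mem_Icc.mpr ⟨lam.parts_pos hi, le_of_mem_parts hi⟩

theorem sum_count_mul_eq : ∑ i ∈ Icc 1 m, lam.parts.count i * i = m := by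
  conv_rhs => rw [← lam.parts_sum, sum_multiset_count_of_subset _ _
    fun i hi => lam.mem_Icc_of_mem_parts (Multiset.mem_toFinset.mp hi)]
  rfl

theorem sum_succ_mul_count_eq : ∑ i ∈ Icc 1 m, (i + 1) * lam.parts.count i =
    m + Multiset.card lam.parts := by
  calc ∑ i ∈ Icc 1 m, (i + 1) * lam.parts.count i
      = ∑ i ∈ Icc 1 m, (lam.parts.count i * i + lam.parts.count i) :=
        sum_congr rfl fun i _ => by ring
    _ = m + Multiset.card lam.parts := by
      rw [sum_add_distrib, lam.sum_count_mul_eq,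
        Multiset.sum_count_eq_card fun i => lam.mem_Icc_of_mem_parts]

theorem prod_factorial_pow_mul_factorial_count_dvd :
    ∏ i ∈ Icc 1 m, (i ! ^ lam.parts.count i * (lam.parts.count i)!) ∣ m ! := by
  calc ∏ i ∈ Icc 1 m, (i ! ^ lam.parts.count i * (lam.parts.count i)!)
      ∣ ∏ i ∈ Icc 1 m, (lam.parts.count i * i)! :=
        prod_dvd_prod_of_dvd _ _ fun i hi => Dvd.intro_left _ (by
          rw [← mul_assoc]; exact Nat.uniformBell_mul_eq _ (by grind))
    _ ∣ (∑ i ∈ Icc 1 m, lam.parts.count i * i)! := Nat.prod_factorial_dvd_factorial_sum _ _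
    _ = m ! := by rw [lam.sum_count_mul_eq]

theorem card_parts_eq_one_iff (hm : m ≠ 0) : Multiset.card lam.parts = 1 ↔ lam = indiscrete m := by
  refine ⟨fun h => ?_, fun h => by simp [h, indiscrete_parts hm]⟩
  obtain ⟨a, ha⟩ := Multiset.card_eq_one.mp h
  have : a = m := by simpa [ha] using lam.parts_sum
  ext1
  rw [ha, this, indiscrete_parts hm]

theorem prod_count_indiscrete {M : Type*} [CommMonoid M] (hm : m ≠ 0) (g : ℕ → ℕ → M)
    (hg : ∀ i, g i 0 = 1) : ∏ i ∈ Icc 1 m, g i ((indiscrete m).parts.count i) = g m 1 := by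
  rw [indiscrete_parts hm, prod_eq_single m (fun i _ hi => by rw [Multiset.count_singleton,
    if_neg hi, hg]) (by grind), Multiset.count_singleton_self]

end Nat.Partition

section Bell

open Nat.Partition

def bellCoeff {m : ℕ} (lam : m.Partition) : ℕ :=
  m ! / ∏ i ∈ Icc 1 m, (i ! ^ lam.parts.count i * (lam.parts.count i)!)

variable {R : Type*} [CommRing R] [Algebra ℚ R] {m j : ℕ}

theorem bellPoly_eq_sum (x : ℕ → R) :
    bellPoly m j x = ∑ lam : m.Partition with Multiset.card lam.parts = j,
      bellCoeff lam • ∏ i ∈ Icc 1 m, x i ^ lam.parts.count i := by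
  rw [bellPoly, sum_filter]
  refine sum_congr rfl fun lam _ => ?_
  split_ifs
  · rw [bellCoeff, ← Nat.cast_smul_eq_nsmul ℚ, Nat.cast_div
      lam.prod_factorial_pow_mul_factorial_count_dvd (by positivity)]
    push_cast
    rfl
  · rfl

theorem bellPoly_congr {x y : ℕ → R} (h : ∀ i ∈ Icc 1 m, x i = y i) :
    bellPoly m j x = bellPoly m j y := by
  simp only [bellPoly_eq_sum]
  exact sum_congr rfl fun lam _ => by rw [prod_congr rfl fun i hi => by rw [h i hi]]

theorem bellPoly_mem {S : Subring R} {x : ℕ → R} (hx : ∀ i ∈ Icc 1 m, x i ∈ S) :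
    bellPoly m j x ∈ S := by
  rw [bellPoly_eq_sum]
  exact sum_mem fun lam _ => nsmul_mem (prod_mem fun i hi => pow_mem (hx i hi) _) _

theorem bellPoly_one (hm : m ≠ 0) (x : ℕ → R) : bellPoly m 1 x = x m := by
  simp only [bellPoly_eq_sum, card_parts_eq_one_iff _ hm, filter_eq', mem_univ, if_true,
    sum_singleton, bellCoeff]
  rw [prod_count_indiscrete hm (fun i c => i ! ^ c * c !) (by simp),
    prod_count_indiscrete hm (fun i c => x i ^ c) (by simp)]
  simp [Nat.div_self m.factorial_pos]

theorem bellPoly_nonneg [PartialOrder R] [IsOrderedRing R] {x : ℕ → R}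
    (hx : ∀ i ∈ Icc 1 m, 0 ≤ x i) : 0 ≤ bellPoly m j x := by
  rw [bellPoly_eq_sum]
  exact sum_nonneg fun lam _ => nsmul_nonneg (prod_nonneg fun i hi => pow_nonneg (hx i hi) _) _

theorem pow_dvd_bellPoly {y : R} {x : ℕ → R} (hx : ∀ i ∈ Icc 1 m, y ^ (i + 1) ∣ x i) :
    y ^ (m + j) ∣ bellPoly m j x := by
  rw [bellPoly_eq_sum]
  refine dvd_sum fun lam hlam => dvd_nsmul_of_dvd _ ?_
  rw [← (mem_filter.mp hlam).2, ← lam.sum_succ_mul_count_eq, ← prod_pow_eq_pow_sum]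
  exact prod_dvd_prod_of_dvd _ _ fun i hi => pow_mul y _ _ ▸ pow_dvd_pow_of_dvd (hx i hi) _

theorem coeff_bellPoly_of_X_pow_dvd {x : ℕ → R⟦X⟧} (hx : ∀ i ∈ Icc 1 m, X ^ (i + 1) ∣ x i) :
    coeff (m + j) (bellPoly m j x) = bellPoly m j fun i => coeff (i + 1) (x i) := by
  simp only [bellPoly_eq_sum, map_sum, map_nsmul]
  refine sum_congr rfl fun lam hlam => ?_
  rw [← (mem_filter.mp hlam).2, ← lam.sum_succ_mul_count_eq, coeff_prod_of_X_pow_dvd]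
  · congr 1
    exact prod_congr rfl fun i hi => coeff_pow_of_X_pow_dvd (hx i hi) _
  · exact fun i hi => pow_mul (X : R⟦X⟧) _ _ ▸ pow_dvd_pow_of_dvd (hx i hi) _

end Bell

theorem coeff_nuOne (n : ℕ) :
    coeff n nuOne = if 2 ≤ n then (-1) ^ n * ((n - 2)! : ℚ) / n ! else 0 :=
  coeff_mk _ _

theorem nuOne_mem_hurwitzSubring : nuOne ∈ hurwitzSubring := by
  intro n
  rw [coeff_nuOne]
  split_ifs
  · refine ⟨(-1) ^ n * (n - 2)!, ?_⟩
    have : (n ! : ℚ) ≠ 0 := by positivity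
    simp only [eq_intCast, Int.cast_mul, Int.cast_pow, Int.cast_neg, Int.cast_one,
      Int.cast_natCast]
    field_simp
  · simp

theorem X_sq_dvd_nuOne : X ^ 2 ∣ nuOne :=
  X_pow_dvd_iff.mpr fun n hn => by rw [coeff_nuOne, if_neg (by omega)]

theorem coeff_iterate_derivative_nuOne {k j : ℕ} (hj : 1 ≤ j) (h : k + j = 2) :
    coeff k ((derivative ℚ)^[j] nuOne) = 1 := by
  rw [coeff_iterate_derivative, h, coeff_nuOne, if_pos le_rfl]
  obtain ⟨rfl, rfl⟩ | ⟨rfl, rfl⟩ : k = 0 ∧ j = 2 ∨ k = 1 ∧ j = 1 := by omega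
  all_goals norm_num [Nat.ascFactorial, Nat.factorial]

theorem X_dvd_derivative_nuOne : X ∣ (derivative ℚ)^[1] nuOne := by
  rw [X_dvd_iff, constantCoeff_iterate_derivative, coeff_nuOne, if_neg (by norm_num), mul_zero]

theorem nuSeries_add_two (M : ℕ) :
    nuSeries (M + 2) =
      ∑ j ∈ Icc 1 (M + 1), (derivative ℚ)^[j] nuOne * bellPoly (M + 1) j nuSeries := by
  rw [nuSeries]
  refine sum_congr rfl fun j _ => ?_
  rw [bellPoly_congr (y := nuSeries) fun i hi => dif_pos (by grind)]
  rfl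

theorem nuSeries_mem_hurwitzSubring (m : ℕ) : nuSeries m ∈ hurwitzSubring := by
  induction m using nuSeries.induct with
  | case1 => rw [nuSeries]; exact zero_mem _
  | case2 => rw [nuSeries]; exact nuOne_mem_hurwitzSubring
  | case3 M ih =>
    rw [nuSeries_add_two]
    exact sum_mem fun j _ => mul_mem
      (iterate_derivative_mem_hurwitzSubring nuOne_mem_hurwitzSubring j)
      (bellPoly_mem fun i hi => ih i (by grind))

theorem X_pow_dvd_nuSeries (m : ℕ) : X ^ (m + 1) ∣ nuSeries m := by
  induction m using nuSeries.induct with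
  | case1 => rw [nuSeries]; exact dvd_zero _
  | case2 => rw [nuSeries]; exact X_sq_dvd_nuOne
  | case3 M ih =>
    have hbell (j : ℕ) : X ^ (M + 1 + j) ∣ bellPoly (M + 1) j nuSeries :=
      pow_dvd_bellPoly fun i hi => ih i (by grind)
    rw [nuSeries_add_two]
    refine dvd_sum fun j hj => ?_
    obtain rfl | hj2 : j = 1 ∨ 2 ≤ j := by grind
    · exact pow_succ' (X : ℚ⟦X⟧) (M + 2) ▸ mul_dvd_mul X_dvd_derivative_nuOne (hbell 1)
    · exact (pow_dvd_pow (X : ℚ⟦X⟧) (by omega)).trans (dvd_mul_of_dvd_right (hbell j) _)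

theorem coeff_succ_nuSeries_pos {m : ℕ} (hm : 1 ≤ m) : 0 < coeff (m + 1) (nuSeries m) := by
  induction m using nuSeries.induct with
  | case1 => omega
  | case2 => rw [nuSeries, coeff_nuOne]; norm_num [Nat.factorial]
  | case3 M ih =>
    have hlead (i : ℕ) (hi : i ∈ Icc 1 (M + 1)) : 0 < coeff (i + 1) (nuSeries i) :=
      ih i (by grind) (by grind)
    have hdvd (i : ℕ) (_ : i ∈ Icc 1 (M + 1)) : X ^ (i + 1) ∣ nuSeries i := X_pow_dvd_nuSeries i
    have hterm1 :
        0 < coeff (M + 2 + 1) ((derivative ℚ)^[1] nuOne * bellPoly (M + 1) 1 nuSeries) := by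
      rw [show M + 2 + 1 = 1 + (M + 1 + 1) by ring, bellPoly_one (by omega),
        coeff_mul_of_X_pow_dvd ((pow_one (X : ℚ⟦X⟧)).symm ▸ X_dvd_derivative_nuOne)
          (X_pow_dvd_nuSeries _),
        coeff_iterate_derivative_nuOne le_rfl rfl, one_mul]
      exact hlead (M + 1) (by simp)
    have hterm (j : ℕ) (hj : j ∈ Icc 1 (M + 1)) :
        0 ≤ coeff (M + 2 + 1) ((derivative ℚ)^[j] nuOne * bellPoly (M + 1) j nuSeries) := by
      obtain rfl | rfl | hj3 : j = 1 ∨ j = 2 ∨ 3 ≤ j := by grind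
      · exact hterm1.le
      · rw [show M + 2 + 1 = 0 + (M + 1 + 2) by ring,
          coeff_mul_of_X_pow_dvd (by simp) (pow_dvd_bellPoly hdvd),
          coeff_iterate_derivative_nuOne (by norm_num) rfl, one_mul,
          coeff_bellPoly_of_X_pow_dvd hdvd]
        exact bellPoly_nonneg fun i hi => (hlead i hi).le
      · exact (X_pow_dvd_iff.mp (dvd_mul_of_dvd_right (pow_dvd_bellPoly hdvd) _) _ (by omega)).ge
    rw [nuSeries_add_two, map_sum]
    exact sum_pos' hterm ⟨1, by simp, hterm1⟩

/-- Each `ν_m` (for `m ≥ 1`) has integer coefficients in the sense that `n!·[t^n]ν_m ∈ ℤ`,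
and its lowest-order nonvanishing term is of order `m+1`: `[t^n]ν_m = 0` for `n ≤ m`,
while `[t^{m+1}]ν_m ≠ 0`. -/
theorem nuSeries_integrality_and_order (m : ℕ) (hm : 1 ≤ m) :
    (∀ n : ℕ, ∃ z : ℤ, (n.factorial : ℚ) * PowerSeries.coeff n (nuSeries m) = (z : ℚ)) ∧
    (∀ n : ℕ, n ≤ m → PowerSeries.coeff n (nuSeries m) = 0) ∧
    PowerSeries.coeff (m + 1) (nuSeries m) ≠ 0 := by
  refine ⟨fun n => ?_, fun n hn => X_pow_dvd_iff.mp (X_pow_dvd_nuSeries m) n (by omega),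
    (coeff_succ_nuSeries_pos hm).ne'⟩
  obtain ⟨z, hz⟩ := nuSeries_mem_hurwitzSubring m n
  exact ⟨z, hz.symm⟩
end
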